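/- arXiv:2202.02069 — 2 statements merged into one kernel-verified Lean document; each statement's English description precedes it below -/
import Mathlib

section
/- Let 𝒞 be an n-round abstract interactive channel and 𝕍 a vulnerability measure satisfying the healthiness conditions. If the classical 𝕍-capacity of 𝒞 is zero, then the non-signalling 𝕍-capacity of 𝒞 is also zero: 𝓛_𝕍(𝒞) = 0 ⟹ 𝓛^ns_𝕍(𝒞) = 0. -/
open scoped Classical

noncomputable section

/-- A probability vector (probability distribution) on a finite type. -/
def IsProbVector {α : Type} [Fintype α] (p : α → ℝ) : Prop :=
  (∀ a, 0 ≤ p a) ∧ ∑ a, p a = 1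

/-- A vulnerability measure: a real-valued function on probability
distributions on finite types. -/
structure VulnMeasure : Type 1 where
  V : ∀ (α : Type) [Fintype α], (α → ℝ) → ℝ

/-- The Bernoulli distribution with parameter `ρ`, as a distribution on `Bool`. -/
def Ber (ρ : ℝ) : Bool → ℝ := fun b => if b then ρ else 1 - ρ

namespace VulnMeasure

variable (𝕍 : VulnMeasure)

/-- `I_𝕍(X;Y)`: the expected increase in 𝕍-vulnerability of the posterior over
the prior, for a joint distribution `p` of `(X, Y)` on `α × β`. -/
def IV {α β : Type} [Fintype α] [Fintype β] (p : α × β → ℝ) : ℝ :=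
  (∑ b : β, (∑ a : α, p (a, b)) * 𝕍.V α (fun a => p (a, b) / ∑ a' : α, p (a', b)))
    - 𝕍.V α (fun a => ∑ b : β, p (a, b))

/-- Healthiness condition (1): the composition inequality for Markov chains
`X → Y → Z` (specified by a prior `pX` and conditional kernels `q`, `r`). -/
def CompositionInequality : Prop :=
  ∀ (α β γ : Type) [Fintype α] [Fintype β] [Fintype γ]
    (pX : α → ℝ) (q : α → β → ℝ) (r : β → γ → ℝ),
    IsProbVector pX → (∀ a, IsProbVector (q a)) → (∀ b, IsProbVector (r b)) →
    𝕍.IV (fun ac : α × γ => ∑ b : β, pX ac.1 * q ac.1 b * r b ac.2) ≤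
        sSup {v | ∃ pX' : α → ℝ, IsProbVector pX' ∧
          v = 𝕍.IV fun ab : α × β => pX' ab.1 * q ab.1 ab.2} ∧
    𝕍.IV (fun ac : α × γ => ∑ b : β, pX ac.1 * q ac.1 b * r b ac.2) ≤
        sSup {v | ∃ pY' : β → ℝ, IsProbVector pY' ∧
          v = 𝕍.IV fun bc : β × γ => pY' bc.1 * r bc.1 bc.2}

/-- Healthiness condition (2): Bernoulli distributions closer to uniform are
strictly less vulnerable. -/
def BerStrictMono : Prop :=
  ∀ ρ ρ' : ℝ, 0 ≤ ρ → ρ ≤ 1 → 0 ≤ ρ' → ρ' ≤ 1 →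
    |ρ - 1 / 2| < |ρ' - 1 / 2| → 𝕍.V Bool (Ber ρ) < 𝕍.V Bool (Ber ρ')

/-- Healthiness condition (3): a binary symmetric channel with error
probability `p` leaks at most `𝕍(Ber(1-p)) - 𝕍(Ber(1/2))`. -/
def BSCBound : Prop :=
  ∀ p : ℝ, 0 ≤ p → p ≤ 1 → ∀ pX : Bool → ℝ, IsProbVector pX →
    𝕍.IV (fun xy : Bool × Bool => pX xy.1 * (if xy.2 = xy.1 then 1 - p else p)) ≤
      𝕍.V Bool (Ber (1 - p)) - 𝕍.V Bool (Ber (1 / 2))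

/-- The three healthiness conditions for a vulnerability measure. -/
def Healthy : Prop := 𝕍.CompositionInequality ∧ 𝕍.BerStrictMono ∧ 𝕍.BSCBound

end VulnMeasure

/-- Alice's view of a single round of a trace. -/
def viewA {A B X Y : Type} (e : A × B × X × Y) : A × X := (e.1, e.2.2.1)

/-- Bob's view of a single round of a trace. -/
def viewB {A B X Y : Type} (e : A × B × X × Y) : B × Y := (e.2.1, e.2.2.2)

/-- An `n`-round abstract interactive channel (`n`-IC): at each round `i`,
given the history so far and the pair of messages sent by Alice and Bob, it
returns a probability distribution on the pair of messages sent back. -/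
structure IC (n : ℕ) (A B X Y : Type) [Fintype X] [Fintype Y] where
  f : ∀ i : Fin n, (Fin i.val → A × B × X × Y) → A × B → X × Y → ℝ
  f_prob : ∀ i h ab, IsProbVector (f i h ab)

/-- The `i`-th prefix of a trace. -/
def prefixOf {n : ℕ} {α : Type} (t : Fin n → α) (i : Fin n) : Fin i.val → α :=
  fun j => t ⟨j.val, lt_trans j.isLt i.isLt⟩

/-- Alice's view of the `i`-th prefix of a trace. -/
def aView {n : ℕ} {A B X Y : Type} (t : Fin n → A × B × X × Y) (i : Fin n) :
    Fin i.val → A × X := fun j => viewA (prefixOf t i j)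

/-- Bob's view of the `i`-th prefix of a trace. -/
def bView {n : ℕ} {A B X Y : Type} (t : Fin n → A × B × X × Y) (i : Fin n) :
    Fin i.val → B × Y := fun j => viewB (prefixOf t i j)

/-- Bob's view of a whole trace. -/
def bobView {n : ℕ} {A B X Y : Type} (t : Fin n → A × B × X × Y) : Fin n → B × Y :=
  fun i => viewB (t i)

/-- A classical (probabilistic) strategy for Alice. -/
structure AStrat (n : ℕ) (A X : Type) [Fintype A] where
  g : ∀ i : Fin n, (Fin i.val → A × X) → A → ℝ
  g_prob : ∀ i h, IsProbVector (g i h)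

/-- A classical (probabilistic) strategy for Bob. -/
structure BStrat (n : ℕ) (B Y : Type) [Fintype B] where
  g : ∀ i : Fin n, (Fin i.val → B × Y) → B → ℝ
  g_prob : ∀ i h, IsProbVector (g i h)

variable {n : ℕ} {A B X Y : Type} [Fintype A] [Fintype B] [Fintype X] [Fintype Y]

/-- The probability contributed by the channel at round `i` of trace `t`. -/
def chanStep (C : IC n A B X Y) (t : Fin n → A × B × X × Y) (i : Fin n) : ℝ :=
  C.f i (prefixOf t i) ((t i).1, (t i).2.1) ((t i).2.2.1, (t i).2.2.2)

/-- The probability of a trace under classical strategies for Alice and Bob. -/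
def traceProb (C : IC n A B X Y) (sA : AStrat n A X) (sB : BStrat n B Y)
    (t : Fin n → A × B × X × Y) : ℝ :=
  ∏ i : Fin n, sA.g i (aView t i) (t i).1 * sB.g i (bView t i) (t i).2.1 * chanStep C t i

/-- The joint distribution of the secret and Bob's view of the trace, given a
prior `pK` on secrets and trace distributions `P k`. -/
def bobJoint {K : Type} [Fintype K] (pK : K → ℝ)
    (P : K → (Fin n → A × B × X × Y) → ℝ) : K × (Fin n → B × Y) → ℝ :=
  fun kv => pK kv.1 * ∑ t : Fin n → A × B × X × Y, if bobView t = kv.2 then P kv.1 t else 0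

/-- The 𝕍-leakage to Bob : the expected posterior 𝕍-vulnerability of the
secret given Bob's view, minus the prior vulnerability. -/
def leakage (𝕍 : VulnMeasure) {K : Type} [Fintype K] (pK : K → ℝ)
    (P : K → (Fin n → A × B × X × Y) → ℝ) : ℝ :=
  𝕍.IV (bobJoint pK P)

/-- A secret: a finite set together with a prior probability distribution. -/
structure Secret : Type 1 where
  K : Type
  [fin : Fintype K]
  p : K → ℝ
  prob : IsProbVector p

attribute [instance] Secret.fin

/-- The classical 𝕍-capacity of a channel: the supremum of 𝕍-leakage over all
secrets and all classical strategies. -/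
def classicalCapacity (𝕍 : VulnMeasure) (C : IC n A B X Y) : ℝ :=
  sSup {r | ∃ (s : Secret) (φA : s.K → AStrat n A X) (sB : BStrat n B Y),
    r = leakage 𝕍 s.p fun k => traceProb C (φA k) sB}

/-- An orthogonal projective measurement with outcomes in `O` on `ℂ^d`. -/
structure ProjMeas (d : ℕ) (O : Type) [Fintype O] where
  P : O → Matrix (Fin d) (Fin d) ℂ
  herm : ∀ o, (P o).IsHermitian
  idem : ∀ o, P o * P o = P o
  orth : ∀ o o', o ≠ o' → P o * P o' = 0
  complete : ∑ o, P o = 1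

/-- A quantum joint strategy: a shared entangled state on `ℂ^{dA} ⊗ ℂ^{dB}`,
projective measurements for Alice (depending on the secret and her view) and
for Bob (depending on his view). -/
structure QStrat (n : ℕ) (K A B X Y : Type) [Fintype A] [Fintype B] where
  dA : ℕ
  dB : ℕ
  ψ : Fin dA × Fin dB → ℂ
  unit : ∑ q, Complex.normSq (ψ q) = 1
  Am : ∀ (k : K) (i : Fin n), (Fin i.val → A × X) → ProjMeas dA A
  Bm : ∀ (i : Fin n), (Fin i.val → B × Y) → ProjMeas dB B

/-- The ordered product `A^k_h` of Alice's projections along a history `h` of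
length `m` (later rounds act on the left). -/
def aliceHistProd {K : Type} (S : QStrat n K A B X Y) (k : K) {m : ℕ} (hm : m ≤ n)
    (h : Fin m → A × B × X × Y) : Matrix (Fin S.dA) (Fin S.dA) ℂ :=
  (((List.finRange m).map fun i =>
      (S.Am k ⟨i.val, lt_of_lt_of_le i.isLt hm⟩
          (fun j => viewA (h ⟨j.val, lt_trans j.isLt i.isLt⟩))).P (h i).1).reverse).prod

/-- The ordered product `B_h` of Bob's projections along a history `h`. -/
def bobHistProd {K : Type} (S : QStrat n K A B X Y) {m : ℕ} (hm : m ≤ n)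
    (h : Fin m → A × B × X × Y) : Matrix (Fin S.dB) (Fin S.dB) ℂ :=
  (((List.finRange m).map fun i =>
      (S.Bm ⟨i.val, lt_of_lt_of_le i.isLt hm⟩
          (fun j => viewB (h ⟨j.val, lt_trans j.isLt i.isLt⟩))).P (h i).2.1).reverse).prod

/-- `⟨ψ|A^k_t ⊗ B_t|ψ⟩` for a full trace `t`. -/
def qPath {K : Type} (S : QStrat n K A B X Y) (k : K) (t : Fin n → A × B × X × Y) : ℝ :=
  (dotProduct (star S.ψ)
    ((Matrix.kroneckerMap (· * ·) (aliceHistProd S k le_rfl t)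
        (bobHistProd S le_rfl t)).mulVec S.ψ)).re

/-- The probability of a trace under a quantum joint strategy. -/
def qTraceProb (C : IC n A B X Y) {K : Type} (S : QStrat n K A B X Y) (k : K)
    (t : Fin n → A × B × X × Y) : ℝ :=
  qPath S k t * ∏ i : Fin n, chanStep C t i

/-- The entangled 𝕍-capacity of a channel: the supremum of 𝕍-leakage over all
secrets and all quantum joint strategies. -/
def entCapacity (𝕍 : VulnMeasure) (C : IC n A B X Y) : ℝ :=
  sSup {r | ∃ (s : Secret) (S : QStrat n s.K A B X Y),
    r = leakage 𝕍 s.p fun k => qTraceProb C S k}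

/-- A generalised strategy: a joint (correlated) probabilistic strategy for
Alice and Bob, possibly depending on the secret. -/
structure GenStrat (n : ℕ) (K A B X Y : Type) [Fintype A] [Fintype B] where
  g : ∀ (k : K) (i : Fin n), (Fin i.val → A × B × X × Y) → A × B → ℝ
  g_prob : ∀ k i h, IsProbVector (g k i h)

/-- The non-signalling conditions for a generalised strategy. -/
def GenStrat.NonSignalling {K : Type} (S : GenStrat n K A B X Y) : Prop :=
  (∀ (k k' : K) (i : Fin n) (h h' : Fin i.val → A × B × X × Y),
      (fun j => viewB (h j)) = (fun j => viewB (h' j)) →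
      ∀ b : B, ∑ a : A, S.g k i h (a, b) = ∑ a : A, S.g k' i h' (a, b)) ∧
  (∀ (k : K) (i : Fin n) (h h' : Fin i.val → A × B × X × Y),
      (fun j => viewA (h j)) = (fun j => viewA (h' j)) →
      ∀ a : A, ∑ b : B, S.g k i h (a, b) = ∑ b : B, S.g k i h' (a, b))

/-- The probability of a trace under a generalised strategy. -/
def genTraceProb (C : IC n A B X Y) {K : Type} (S : GenStrat n K A B X Y) (k : K)
    (t : Fin n → A × B × X × Y) : ℝ :=
  ∏ i : Fin n, S.g k i (prefixOf t i) ((t i).1, (t i).2.1) * chanStep C t i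

/-- The non-signalling 𝕍-capacity of a channel: the supremum of 𝕍-leakage over
all secrets and all non-signalling generalised strategies. -/
def nsCapacity (𝕍 : VulnMeasure) (C : IC n A B X Y) : ℝ :=
  sSup {r | ∃ (s : Secret) (S : GenStrat n s.K A B X Y), S.NonSignalling ∧
    r = leakage 𝕍 s.p fun k => genTraceProb C S k}

end

/-!
Fix a non-signalling strategy `S`. By condition (i), Bob's marginal of each round's joint move
depends only on Bob's view, so it is a classical Bob strategy; dividing the joint move by it
gives, for each fixed Bob view `v` and secret `k`, a classical Alice strategy. On traces seen
by Bob as `v`, the trace probability of `S` under `k` factorises as that of this classical pair.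

Zero classical capacity forces Bob's view distribution to be independent of Alice's classical
strategy: otherwise a uniform secret bit choosing between two Alice strategies would leak, by
strict monotonicity of `𝕍` on Bernoulli distributions. Hence Bob's view distribution under `S`
does not depend on the secret, and the leakage is that of a product distribution, i.e. zero.
-/

noncomputable section

theorem IsProbVector.comp_equiv {α β : Type} [Fintype α] [Fintype β] {p : α → ℝ}
    (hp : IsProbVector p) (e : β ≃ α) : IsProbVector (p ∘ e) :=
  ⟨fun b => hp.1 (e b), by rw [Function.comp_def, e.sum_comp p, hp.2]⟩

theorem IsProbVector.mul_kernel {α β : Type} [Fintype α] [Fintype β] {p : α → ℝ}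
    {q : α → β → ℝ} (hp : IsProbVector p) (hq : ∀ a, IsProbVector (q a)) :
    IsProbVector fun ab : α × β => p ab.1 * q ab.1 ab.2 := by
  refine ⟨fun ab => mul_nonneg (hp.1 _) ((hq _).1 _), ?_⟩
  simp only [Fintype.sum_prod_type, ← Finset.mul_sum, (hq _).2, mul_one, hp.2]

theorem prefixOf_cons_succ {Z : Type} {m : ℕ} (z : Z) (t : Fin m → Z) (i : Fin m) :
    prefixOf (Fin.cons z t : Fin (m + 1) → Z) i.succ = Fin.cons z (prefixOf t i) := by
  funext j
  refine Fin.cases rfl (fun j => ?_) j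
  simp only [prefixOf, Fin.cons_succ]
  rfl

theorem isProbVector_prod_prefixOf {Z : Type} [Fintype Z] :
    ∀ {m : ℕ} (F : ∀ i : Fin m, (Fin i.val → Z) → Z → ℝ), (∀ i h, IsProbVector (F i h)) →
      IsProbVector fun t : Fin m → Z => ∏ i, F i (prefixOf t i) (t i)
  | 0, F, _ => ⟨fun _ => by simp, by simp⟩
  | m + 1, F, hF => by
    refine ⟨fun t => Finset.prod_nonneg fun i _ => (hF i _).1 _, ?_⟩
    have htail z := (isProbVector_prod_prefixOf (fun i h => F i.succ (Fin.cons z h))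
      fun i h => hF i.succ _).2
    have hempty (t : Fin (m + 1) → Z) : prefixOf t 0 = Fin.elim0 := funext (·.elim0)
    rw [← (Fin.consEquiv fun _ => Z).sum_comp, Fintype.sum_prod_type]
    simp only [Fin.consEquiv, Equiv.coe_fn_mk, Fin.prod_univ_succ, Fin.cons_zero, Fin.cons_succ,
      hempty, prefixOf_cons_succ, ← Finset.mul_sum, htail, mul_one]
    exact (hF 0 _).2

def pushforward {α β : Type} [Fintype α] [DecidableEq β] (f : α → β) (p : α → ℝ) (b : β) : ℝ :=
  ∑ a, if f a = b then p a else 0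

theorem IsProbVector.pushforward {α β : Type} [Fintype α] [Fintype β] [DecidableEq β]
    {p : α → ℝ} (hp : IsProbVector p) (f : α → β) : IsProbVector (_root_.pushforward f p) := by
  refine ⟨fun b => Finset.sum_nonneg fun a _ => ?_, ?_⟩
  · split_ifs
    exacts [hp.1 a, le_rfl]
  · simp only [_root_.pushforward]
    rw [Finset.sum_comm]
    simpa using hp.2

theorem div_sum_eq_Ber {f : Bool → ℝ} (hf : f true + f false ≠ 0) :
    (fun b => f b / ∑ b', f b') = Ber (f true / (f true + f false)) := by
  funext b
  rw [Fintype.sum_bool]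
  cases b
  · change f false / (f true + f false) = 1 - f true / (f true + f false)
    field_simp
    ring
  · rfl

namespace VulnMeasure

theorem IV_mul_eq_zero (𝕍 : VulnMeasure) {α β : Type} [Fintype α] [Fintype β] {p : α → ℝ}
    {q : β → ℝ} (hp : ∑ a, p a = 1) (hq : ∑ b, q b = 1) :
    𝕍.IV (fun ab : α × β => p ab.1 * q ab.2) = 0 := by
  have hposterior (b : β) : q b * 𝕍.V α (fun a => p a * q b / q b) = q b * 𝕍.V α p := by
    rcases eq_or_ne (q b) 0 with hb | hb
    · simp [hb]
    · simp only [mul_div_cancel_right₀ _ hb]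
  simp only [IV, ← Finset.sum_mul, ← Finset.mul_sum, hp, hq, one_mul, mul_one, hposterior]
  exact sub_self _

variable {𝕍 : VulnMeasure}

theorem BerStrictMono.V_half_lt (h : 𝕍.BerStrictMono) {ρ : ℝ} (h0 : 0 ≤ ρ) (h1 : ρ ≤ 1)
    (hρ : ρ ≠ 1 / 2) : 𝕍.V Bool (Ber (1 / 2)) < 𝕍.V Bool (Ber ρ) :=
  h _ _ (by norm_num) (by norm_num) h0 h1 (by simpa [sub_eq_zero] using hρ)

theorem BerStrictMono.V_half_lt_posterior (h : 𝕍.BerStrictMono) {f : Bool → ℝ}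
    (hf : ∀ b, 0 ≤ f b) (hne : f false ≠ f true) :
    𝕍.V Bool (Ber (1 / 2)) < 𝕍.V Bool (fun b => f b / ∑ b', f b') := by
  have hpos : 0 < f true + f false :=
    lt_of_le_of_ne (add_nonneg (hf _) (hf _)) fun h0 => hne (by linarith [hf true, hf false])
  rw [div_sum_eq_Ber hpos.ne']
  refine h.V_half_lt (div_nonneg (hf _) hpos.le) ((div_le_one hpos).2 (by linarith [hf false]))
    fun hρ => hne ?_
  rw [div_eq_iff hpos.ne'] at hρ
  linarith

theorem BerStrictMono.V_half_le_posterior (h : 𝕍.BerStrictMono) {f : Bool → ℝ}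
    (hf : ∀ b, 0 ≤ f b) (hsum : ∑ b, f b ≠ 0) :
    𝕍.V Bool (Ber (1 / 2)) ≤ 𝕍.V Bool (fun b => f b / ∑ b', f b') := by
  rw [Fintype.sum_bool] at hsum
  by_cases hne : f false = f true
  · have hρ : f true / (f true + f false) = 1 / 2 := by
      rw [div_eq_iff hsum, hne]
      ring
    rw [div_sum_eq_Ber hsum, hρ]
  · exact (h.V_half_lt_posterior hf hne).le

theorem BerStrictMono.IV_pos (h : 𝕍.BerStrictMono) {β : Type} [Fintype β] {P : Bool → β → ℝ}
    (hP : ∀ b, IsProbVector (P b)) (hne : P false ≠ P true) :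
    0 < 𝕍.IV (fun bw : Bool × β => 1 / 2 * P bw.1 bw.2) := by
  obtain ⟨v, hv⟩ := Function.ne_iff.1 hne
  set f : β → Bool → ℝ := fun w b => 1 / 2 * P b w
  have hf (w : β) (b : Bool) : 0 ≤ f w b := mul_nonneg (by norm_num) ((hP b).1 w)
  have hprior : (fun b => ∑ w, f w b) = Ber (1 / 2) := by
    funext b
    rw [← Finset.mul_sum, (hP b).2]
    cases b <;> norm_num [Ber]
  have hmass : ∑ w, ∑ b, f w b = 1 := by
    rw [Finset.sum_comm]
    simp only [f, ← Finset.mul_sum, (hP _).2, Fintype.sum_bool]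
    norm_num
  have hle (w : β) : (∑ b, f w b) * 𝕍.V Bool (Ber (1 / 2)) ≤
      (∑ b, f w b) * 𝕍.V Bool (fun b => f w b / ∑ b', f w b') := by
    by_cases hsum : ∑ b, f w b = 0
    · simp only [hsum, zero_mul, le_refl]
    · exact mul_le_mul_of_nonneg_left (h.V_half_le_posterior (hf w) hsum)
        (Finset.sum_nonneg fun b _ => hf w b)
  have hlt : (∑ b, f v b) * 𝕍.V Bool (Ber (1 / 2)) <
      (∑ b, f v b) * 𝕍.V Bool (fun b => f v b / ∑ b', f v b') := by
    have hfv : f v false ≠ f v true := by simpa [f] using hv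
    have hsum : 0 < ∑ b, f v b := by
      refine lt_of_le_of_ne (Finset.sum_nonneg fun b _ => hf v b) fun h0 => hfv ?_
      rw [Fintype.sum_bool] at h0
      linarith [hf v true, hf v false]
    exact mul_lt_mul_of_pos_left (h.V_half_lt_posterior (hf v) hfv) hsum
  have hgain : 𝕍.V Bool (Ber (1 / 2)) <
      ∑ w, (∑ b, f w b) * 𝕍.V Bool (fun b => f w b / ∑ b', f w b') :=
    calc 𝕍.V Bool (Ber (1 / 2)) = ∑ w, (∑ b, f w b) * 𝕍.V Bool (Ber (1 / 2)) := by
          rw [← Finset.sum_mul, hmass, one_mul]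
      _ < _ := Finset.sum_lt_sum (fun w _ => hle w) ⟨v, Finset.mem_univ v, hlt⟩
  simp only [IV]
  rw [hprior]
  linarith

end VulnMeasure

section Channel

variable {n : ℕ} {K A B X Y : Type} [Fintype A] [Fintype B]

theorem bobJoint_eq [Fintype X] [Fintype Y] [Fintype K] (pK : K → ℝ)
    (P : K → (Fin n → A × B × X × Y) → ℝ) :
    bobJoint pK P = fun kv => pK kv.1 * pushforward bobView (P kv.1) kv.2 :=
  rfl

def classicalLeakages [Fintype X] [Fintype Y] (𝕍 : VulnMeasure) (C : IC n A B X Y) : Set ℝ :=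
  {r | ∃ (s : Secret) (φA : s.K → AStrat n A X) (sB : BStrat n B Y),
    r = leakage 𝕍 s.p fun k => traceProb C (φA k) sB}

def nsLeakages [Fintype X] [Fintype Y] (𝕍 : VulnMeasure) (C : IC n A B X Y) : Set ℝ :=
  {r | ∃ (s : Secret) (S : GenStrat n s.K A B X Y), S.NonSignalling ∧
    r = leakage 𝕍 s.p fun k => genTraceProb C S k}

def IC.AliceCannotSignal [Fintype X] [Fintype Y] (C : IC n A B X Y) : Prop :=
  ∀ (sA sA' : AStrat n A X) (sB : BStrat n B Y),
    pushforward bobView (traceProb C sA sB) = pushforward bobView (traceProb C sA' sB)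

def mergeViews {m : ℕ} (α : Fin m → A × X) (β : Fin m → B × Y) : Fin m → A × B × X × Y :=
  fun j => ((α j).1, (β j).1, (α j).2, (β j).2)

namespace GenStrat

theorem isProbVector_genTraceProb [Fintype X] [Fintype Y] (C : IC n A B X Y)
    (S : GenStrat n K A B X Y) (k : K) : IsProbVector (genTraceProb C S k) :=
  isProbVector_prod_prefixOf
    (fun i h z => S.g k i h (z.1, z.2.1) * C.f i h (z.1, z.2.1) (z.2.2.1, z.2.2.2))
    fun i h => ((S.g_prob k i h).mul_kernel (C.f_prob i h)).comp_equiv (Equiv.prodAssoc _ _ _).symm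

def ofClassical (φA : K → AStrat n A X) (sB : BStrat n B Y) : GenStrat n K A B X Y where
  g k i h ab := (φA k).g i (fun j => viewA (h j)) ab.1 * sB.g i (fun j => viewB (h j)) ab.2
  g_prob k i _ := ((φA k).g_prob i _).mul_kernel fun _ => sB.g_prob i _

theorem nonSignalling_ofClassical (φA : K → AStrat n A X) (sB : BStrat n B Y) :
    (ofClassical φA sB).NonSignalling := by
  constructor
  · intro k k' i h h' hB b
    simp only [ofClassical, ← Finset.sum_mul, ((φA _).g_prob i _).2, hB]
  · intro k i h h' hA a
    simp only [ofClassical, ← Finset.mul_sum, (sB.g_prob i _).2, hA]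

variable (S : GenStrat n K A B X Y)

def aMarginal (k : K) (i : Fin n) (h : Fin i.val → A × B × X × Y) (a : A) : ℝ :=
  ∑ b, S.g k i h (a, b)

def bMarginal (k : K) (i : Fin n) (h : Fin i.val → A × B × X × Y) (b : B) : ℝ :=
  ∑ a, S.g k i h (a, b)

theorem isProbVector_aMarginal (k : K) (i : Fin n) (h : Fin i.val → A × B × X × Y) :
    IsProbVector (S.aMarginal k i h) :=
  ⟨fun _ => Finset.sum_nonneg fun _ _ => (S.g_prob k i h).1 _,
    by rw [← (S.g_prob k i h).2, Fintype.sum_prod_type]; rfl⟩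

theorem isProbVector_bMarginal (k : K) (i : Fin n) (h : Fin i.val → A × B × X × Y) :
    IsProbVector (S.bMarginal k i h) :=
  ⟨fun _ => Finset.sum_nonneg fun _ _ => (S.g_prob k i h).1 _,
    by rw [← (S.g_prob k i h).2, Fintype.sum_prod_type, Finset.sum_comm]; rfl⟩

/-- For a non-signalling `S` neither the secret `k₀` nor Alice's entries of the history, taken
from `t₀`, matter (`NonSignalling.bMarginal_eq`). -/
def bMarginalStrat (k₀ : K) (t₀ : Fin n → A × B × X × Y) : BStrat n B Y where
  g i w := S.bMarginal k₀ i (mergeViews (aView t₀ i) w)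
  g_prob i _ := S.isProbVector_bMarginal k₀ i _

/-- Alice's move conditioned on Bob's move being the one recorded in `v`; when that move has
probability zero the choice is irrelevant, and Alice's marginal is used. -/
def condAliceStrat (k : K) (v : Fin n → B × Y) : AStrat n A X where
  g i α a :=
    if S.bMarginal k i (mergeViews α (prefixOf v i)) (v i).1 = 0 then
      S.aMarginal k i (mergeViews α (prefixOf v i)) a
    else S.g k i (mergeViews α (prefixOf v i)) (a, (v i).1) /
      S.bMarginal k i (mergeViews α (prefixOf v i)) (v i).1
  g_prob i α := by
    split_ifs with hm
    · exact S.isProbVector_aMarginal k i _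
    · refine ⟨fun a => div_nonneg ((S.g_prob k i _).1 _) ((S.isProbVector_bMarginal k i _).1 _),
        ?_⟩
      rw [← Finset.sum_div]
      exact div_self hm

variable {S}

theorem NonSignalling.bMarginal_eq (hS : S.NonSignalling) (k k' : K) (i : Fin n)
    (h h' : Fin i.val → A × B × X × Y) (hB : (fun j => viewB (h j)) = fun j => viewB (h' j)) :
    S.bMarginal k i h = S.bMarginal k' i h' :=
  funext (hS.1 k k' i h h' hB)

theorem NonSignalling.g_eq_condAliceStrat_mul_bMarginalStrat (hS : S.NonSignalling) (k k₀ : K)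
    (t₀ t : Fin n → A × B × X × Y) (i : Fin n) :
    S.g k i (prefixOf t i) ((t i).1, (t i).2.1) =
      (S.condAliceStrat k (bobView t)).g i (aView t i) (t i).1 *
        (S.bMarginalStrat k₀ t₀).g i (bView t i) (t i).2.1 := by
  have hbob : (S.bMarginalStrat k₀ t₀).g i (bView t i) = S.bMarginal k i (prefixOf t i) :=
    hS.bMarginal_eq k₀ k i _ _ rfl
  change _ = (if S.bMarginal k i (prefixOf t i) (t i).2.1 = 0 then _ else _) * _
  rw [hbob]
  split_ifs with hm
  · have hle : S.g k i (prefixOf t i) ((t i).1, (t i).2.1) ≤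
        S.bMarginal k i (prefixOf t i) (t i).2.1 :=
      Finset.single_le_sum (f := fun a => S.g k i (prefixOf t i) (a, (t i).2.1))
        (fun a _ => (S.g_prob k i _).1 _) (Finset.mem_univ _)
    rw [hm, mul_zero]
    exact le_antisymm (hle.trans_eq hm) ((S.g_prob k i _).1 _)
  · exact (div_mul_cancel₀ _ hm).symm

theorem NonSignalling.genTraceProb_eq_traceProb [Fintype X] [Fintype Y] (C : IC n A B X Y)
    (hS : S.NonSignalling) (k k₀ : K) (t₀ t : Fin n → A × B × X × Y) :
    genTraceProb C S k t =
      traceProb C (S.condAliceStrat k (bobView t)) (S.bMarginalStrat k₀ t₀) t :=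
  Finset.prod_congr rfl fun i _ => by
    rw [hS.g_eq_condAliceStrat_mul_bMarginalStrat k k₀ t₀ t i]

theorem NonSignalling.pushforward_bobView_genTraceProb_eq [Fintype X] [Fintype Y]
    {C : IC n A B X Y} (hC : C.AliceCannotSignal) (hS : S.NonSignalling) (k k' : K) :
    pushforward bobView (genTraceProb C S k) = pushforward bobView (genTraceProb C S k') := by
  funext v
  rcases isEmpty_or_nonempty (Fin n → A × B × X × Y) with htraces | htraces
  · simp [pushforward]
  obtain ⟨t₀⟩ := htraces
  have hfiber (k : K) : pushforward bobView (genTraceProb C S k) v =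
      pushforward bobView (traceProb C (S.condAliceStrat k v) (S.bMarginalStrat k' t₀)) v := by
    refine Finset.sum_congr rfl fun t _ => ?_
    split_ifs with ht
    · rw [← ht]
      exact hS.genTraceProb_eq_traceProb C k k' t₀ t
    · rfl
  rw [hfiber k, hfiber k', hC]

theorem NonSignalling.leakage_eq_zero [Fintype X] [Fintype Y] {C : IC n A B X Y}
    (hC : C.AliceCannotSignal) (𝕍 : VulnMeasure) {s : Secret} {S : GenStrat n s.K A B X Y}
    (hS : S.NonSignalling) : leakage 𝕍 s.p (fun k => genTraceProb C S k) = 0 := by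
  obtain ⟨k₀, -, -⟩ := Finset.exists_ne_zero_of_sum_ne_zero (s.prob.2.trans_ne one_ne_zero)
  rw [leakage, bobJoint_eq]
  simp_rw [hS.pushforward_bobView_genTraceProb_eq hC _ k₀]
  exact 𝕍.IV_mul_eq_zero s.prob.2 ((S.isProbVector_genTraceProb C k₀).pushforward bobView).2

end GenStrat

theorem isProbVector_traceProb [Fintype X] [Fintype Y] (C : IC n A B X Y) (sA : AStrat n A X)
    (sB : BStrat n B Y) : IsProbVector (traceProb C sA sB) :=
  GenStrat.isProbVector_genTraceProb C (GenStrat.ofClassical (fun _ : Unit => sA) sB) ()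

theorem classicalLeakages_subset_nsLeakages [Fintype X] [Fintype Y] (𝕍 : VulnMeasure)
    (C : IC n A B X Y) : classicalLeakages 𝕍 C ⊆ nsLeakages 𝕍 C := by
  rintro r ⟨s, φA, sB, rfl⟩
  exact ⟨s, .ofClassical φA sB, GenStrat.nonSignalling_ofClassical φA sB, rfl⟩

theorem IC.aliceCannotSignal_of_leakages_nonpos [Fintype X] [Fintype Y] (C : IC n A B X Y)
    {𝕍 : VulnMeasure} (h𝕍 : 𝕍.BerStrictMono) (hcl : ∀ r ∈ classicalLeakages 𝕍 C, r ≤ 0) :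
    C.AliceCannotSignal := by
  intro sA sA' sB
  by_contra hne
  let coin : Secret := ⟨Bool, fun _ => 1 / 2, fun _ => by norm_num, by norm_num⟩
  let φA : Bool → AStrat n A X := fun b => bif b then sA' else sA
  have hleak : 0 < 𝕍.IV fun bw : Bool × (Fin n → B × Y) =>
      1 / 2 * pushforward bobView (traceProb C (φA bw.1) sB) bw.2 :=
    h𝕍.IV_pos (P := fun b => pushforward bobView (traceProb C (φA b) sB))
      (fun b => (isProbVector_traceProb C (φA b) sB).pushforward bobView) hne
  exact (hcl _ ⟨coin, φA, sB, rfl⟩).not_gt hleak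

end Channel

/-- Theorem `thm:nonsig`: for any `n`-round abstract
interactive channel and any vulnerability measure satisfying the healthiness
conditions, zero classical 𝕍-capacity implies zero non-signalling
𝕍-capacity. -/
theorem zero_classical_capacity_implies_zero_nonsignalling_capacity
    {n : ℕ} {A B X Y : Type} [Fintype A] [Fintype B] [Fintype X] [Fintype Y]
    (C : IC n A B X Y) (𝕍 : VulnMeasure) (h𝕍 : 𝕍.Healthy)
    (h : classicalCapacity 𝕍 C = 0) :
    nsCapacity 𝕍 C = 0 := by
  -- `sSup` of a set of reals that is not bounded above is `0`.
  by_cases hbdd : BddAbove (nsLeakages 𝕍 C)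
  swap
  · exact Real.sSup_of_not_bddAbove hbdd
  have hcl (r : ℝ) (hr : r ∈ classicalLeakages 𝕍 C) : r ≤ 0 :=
    (le_csSup (hbdd.mono (classicalLeakages_subset_nsLeakages 𝕍 C)) hr).trans h.le
  have hns (r : ℝ) (hr : r ∈ nsLeakages 𝕍 C) : r = 0 := by
    obtain ⟨s, S, hS, rfl⟩ := hr
    exact hS.leakage_eq_zero (C.aliceCannotSignal_of_leakages_nonpos h𝕍.2.1 hcl) 𝕍
  exact le_antisymm (Real.sSup_nonpos fun r hr => (hns r hr).le)
    (Real.sSup_nonneg fun r hr => (hns r hr).ge)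

end
end

section
/- For the CHSH game 𝔊_CHSH, the entangled value satisfies val*(𝔊_CHSH) ≥ cos²(π/8) ≈ 0.85, while the classical value equals val(𝔊_CHSH) = 3/4; in particular val*(𝔊_CHSH) > val(𝔊_CHSH). -/
open scoped Classical

noncomputable section

variable {n : ℕ} {A B X Y : Type} [Fintype A] [Fintype B] [Fintype X] [Fintype Y]

/-- A two-player one-round non-local game: questions drawn from `QA × QB`
according to `μ`, answers in `AA`, `AB`, decision function `D`. -/
structure Game (QA QB AA AB : Type) [Fintype QA] [Fintype QB] [Fintype AA] [Fintype AB] where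
  μ : QA × QB → ℝ
  μ_prob : IsProbVector μ
  D : QA → QB → AA → AB → Bool

/-- A quantum strategy for a non-local game. -/
structure GQStrat (QA QB AA AB : Type) [Fintype AA] [Fintype AB] where
  dA : ℕ
  dB : ℕ
  ψ : Fin dA × Fin dB → ℂ
  unit : ∑ q, Complex.normSq (ψ q) = 1
  Am : QA → ProjMeas dA AA
  Bm : QB → ProjMeas dB AB

variable {QA QB AA AB : Type} [Fintype QA] [Fintype QB] [Fintype AA] [Fintype AB]

/-- The winning probability of a quantum strategy in a game. -/
def GQStrat.val (G : Game QA QB AA AB) (S : GQStrat QA QB AA AB) : ℝ :=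
  ∑ q : QA × QB, ∑ x : AA, ∑ y : AB,
    G.μ q *
      (dotProduct (star S.ψ)
        ((Matrix.kroneckerMap (· * ·) ((S.Am q.1).P x) ((S.Bm q.2).P y)).mulVec S.ψ)).re *
      (if G.D q.1 q.2 x y then 1 else 0)

/-- The entangled value of a game: the supremum of winning probabilities of
quantum strategies. -/
def Game.entValue (G : Game QA QB AA AB) : ℝ :=
  sSup {v | ∃ S : GQStrat QA QB AA AB, v = GQStrat.val G S}

/-- The classical value of a game: the supremum of winning probabilities of
classical (local probabilistic) strategies. -/
def Game.classicalValue (G : Game QA QB AA AB) : ℝ :=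
  sSup {v | ∃ (f : QA → AA → ℝ) (g : QB → AB → ℝ),
    (∀ q, IsProbVector (f q)) ∧ (∀ q, IsProbVector (g q)) ∧
    v = ∑ q : QA × QB, ∑ x : AA, ∑ y : AB,
      G.μ q * f q.1 x * g q.2 y * (if G.D q.1 q.2 x y then 1 else 0)}

/-- The non-signalling value of a game: the supremum of winning probabilities
over all non-signalling behaviours. -/
def Game.nsValue (G : Game QA QB AA AB) : ℝ :=
  sSup {v | ∃ P : QA → QB → (AA × AB → ℝ),
    (∀ a b, IsProbVector (P a b)) ∧
    (∀ a b b' x, ∑ y : AB, P a b (x, y) = ∑ y : AB, P a b' (x, y)) ∧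
    (∀ a a' b y, ∑ x : AA, P a b (x, y) = ∑ x : AA, P a' b (x, y)) ∧
    v = ∑ q : QA × QB, ∑ xy : AA × AB,
      G.μ q * P q.1 q.2 xy * (if G.D q.1 q.2 xy.1 xy.2 then 1 else 0)}

/-- The CHSH game. -/
def CHSHGame : Game Bool Bool Bool Bool where
  μ := fun _ => 1 / 4
  μ_prob := by
    constructor
    · intro q; norm_num
    · simp [Finset.sum_const, Finset.card_univ]
  D := fun a b x y => xor x y == (a && b)

/-!
Classically, write `α_a = f_a(true) - f_a(false)` and `β_b = g_b(true) - g_b(false)` for the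
biases of the two players' answers. The winning probability is then
`1/2 + (α₀β₀ + α₀β₁ + α₁β₀ - α₁β₁)/8`, and the bracket is at most
`|β₀ + β₁| + |β₀ - β₁| ≤ 2` (the CHSH inequality), so no classical strategy beats `3/4`, which
is attained by always answering `false`.

Quantumly, the players share the Bell state `(|00⟩ + |11⟩)/√2` and measure in the orthonormal
bases at angles `θ_a ∈ {0, π/4}` and `φ_b ∈ {π/8, -π/8}`. Their answers then agree with
probability `cos²(θ_a - φ_b)`, so each of the four question pairs is won with probability
`cos²(π/8)`.
-/

open scoped ComplexOrder Kronecker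
open Matrix Real

lemma Matrix.sum_kronecker_sum {ι κ m n α : Type*} [Fintype ι] [Fintype κ] [CommSemiring α]
    (A : ι → Matrix m m α) (B : κ → Matrix n n α) :
    ∑ x, ∑ y, A x ⊗ₖ B y = (∑ x, A x) ⊗ₖ ∑ y, B y := by
  ext ⟨i, j⟩ ⟨k, l⟩
  simp [kroneckerMap_apply, Matrix.sum_apply, Finset.sum_mul_sum]

lemma star_dotProduct_self_eq_one {ι : Type*} [Fintype ι] {ψ : ι → ℂ}
    (h : ∑ q, Complex.normSq (ψ q) = 1) : star ψ ⬝ᵥ ψ = 1 := by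
  simp [dotProduct, ← Complex.normSq_eq_conj_mul_self, ← Complex.ofReal_sum, h]

lemma ProjMeas.posSemidef {d : ℕ} {O : Type} [Fintype O] (M : ProjMeas d O) (o : O) :
    (M.P o).PosSemidef := by
  have h : (M.P o)ᴴ * M.P o = M.P o := by rw [(M.herm o).eq, M.idem]
  exact h ▸ posSemidef_conjTranspose_mul_self _

namespace GQStrat

variable {QA QB AA AB : Type} [Fintype AA] [Fintype AB] (S : GQStrat QA QB AA AB)

def outcomeProb (a : QA) (b : QB) (x : AA) (y : AB) : ℝ :=
  (star S.ψ ⬝ᵥ ((S.Am a).P x ⊗ₖ (S.Bm b).P y) *ᵥ S.ψ).re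

lemma outcomeProb_nonneg (a : QA) (b : QB) (x : AA) (y : AB) : 0 ≤ S.outcomeProb a b x y :=
  (((S.Am a).posSemidef x).kronecker ((S.Bm b).posSemidef y)).re_dotProduct_nonneg S.ψ

lemma sum_outcomeProb (a : QA) (b : QB) : ∑ x, ∑ y, S.outcomeProb a b x y = 1 := by
  simp only [outcomeProb, ← Complex.re_sum, ← dotProduct_sum, ← sum_mulVec,
    sum_kronecker_sum, (S.Am a).complete, (S.Bm b).complete, one_kronecker_one, one_mulVec,
    star_dotProduct_self_eq_one S.unit, Complex.one_re]

variable [Fintype QA] [Fintype QB]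

lemma val_eq (G : Game QA QB AA AB) :
    S.val G = ∑ q : QA × QB, ∑ x, ∑ y,
      G.μ q * S.outcomeProb q.1 q.2 x y * (if G.D q.1 q.2 x y then 1 else 0) := rfl

lemma val_le_one (G : Game QA QB AA AB) : S.val G ≤ 1 := calc
  S.val G ≤ ∑ q : QA × QB, ∑ x, ∑ y, G.μ q * S.outcomeProb q.1 q.2 x y := by
    rw [val_eq]
    refine Finset.sum_le_sum fun q _ ↦ Finset.sum_le_sum fun x _ ↦ Finset.sum_le_sum fun y _ ↦ ?_
    exact mul_le_of_le_one_right (mul_nonneg (G.μ_prob.1 q) (S.outcomeProb_nonneg _ _ x y))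
      (by split_ifs <;> norm_num)
  _ = ∑ q, G.μ q := by simp only [← Finset.mul_sum, sum_outcomeProb, mul_one]
  _ = 1 := G.μ_prob.2

lemma val_eq_of_forall_win_eq (G : Game QA QB AA AB) {w : ℝ}
    (h : ∀ a b, ∑ x, ∑ y, S.outcomeProb a b x y * (if G.D a b x y then 1 else 0) = w) :
    S.val G = w := calc
  S.val G = ∑ q, G.μ q * w := by simp only [val_eq, mul_assoc, ← Finset.mul_sum, h]
  _ = w := by rw [← Finset.sum_mul, G.μ_prob.2, one_mul]

end GQStrat

lemma Game.val_le_entValue (G : Game QA QB AA AB) (S : GQStrat QA QB AA AB) :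
    S.val G ≤ G.entValue :=
  le_csSup ⟨1, by rintro v ⟨S', rfl⟩; exact S'.val_le_one G⟩ ⟨S, rfl⟩

lemma isProbVector_indicator_eq {α : Type} [Fintype α] [DecidableEq α] (a : α) :
    IsProbVector fun x ↦ if x = a then (1 : ℝ) else 0 :=
  ⟨fun _ ↦ ite_nonneg zero_le_one le_rfl, by simp⟩

def bias (p : Bool → ℝ) : ℝ := p true - p false

lemma IsProbVector.true_add_false {p : Bool → ℝ} (hp : IsProbVector p) :
    p true + p false = 1 := by
  simpa [Fintype.sum_bool] using hp.2

lemma IsProbVector.abs_bias_le_one {p : Bool → ℝ} (hp : IsProbVector p) : |bias p| ≤ 1 := by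
  have := hp.true_add_false
  rw [bias, abs_le]
  constructor <;> linarith [hp.1 true, hp.1 false]

lemma chsh_inequality {α₀ α₁ β₀ β₁ : ℝ} (hα₀ : |α₀| ≤ 1) (hα₁ : |α₁| ≤ 1) (hβ₀ : |β₀| ≤ 1)
    (hβ₁ : |β₁| ≤ 1) : α₀ * β₀ + α₀ * β₁ + α₁ * β₀ - α₁ * β₁ ≤ 2 := by
  have key {α u : ℝ} (hα : |α| ≤ 1) : α * u ≤ |u| :=
    (le_abs_self _).trans (by rw [abs_mul]; exact mul_le_of_le_one_left (abs_nonneg u) hα)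
  have h₀ := key (u := β₀ + β₁) hα₀
  have h₁ := key (u := β₀ - β₁) hα₁
  rw [abs_le] at hβ₀ hβ₁
  cases abs_cases (β₀ + β₁) <;> cases abs_cases (β₀ - β₁) <;> linarith

lemma CHSHGame.classical_win_eq (f g : Bool → Bool → ℝ) (hf : ∀ a, f a true + f a false = 1)
    (hg : ∀ b, g b true + g b false = 1) :
    ∑ q : Bool × Bool, ∑ x, ∑ y,
        CHSHGame.μ q * f q.1 x * g q.2 y * (if CHSHGame.D q.1 q.2 x y then 1 else 0) =
      1 / 2 + (bias (f false) * bias (g false) + bias (f false) * bias (g true) +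
        bias (f true) * bias (g false) - bias (f true) * bias (g true)) / 8 := by
  norm_num [Fintype.sum_prod_type, CHSHGame, bias]
  linear_combination (g false true + g false false + g true true + g true false) *
      (hf false + hf true) / 8 + (hg false + hg true) / 4

lemma CHSHGame.classicalValue_eq : CHSHGame.classicalValue = 3 / 4 := by
  refine IsGreatest.csSup_eq ⟨?_, ?_⟩
  · let f₀ : Bool → Bool → ℝ := fun _ x ↦ if x = false then 1 else 0
    have hf₀ : ∀ a, IsProbVector (f₀ a) := fun _ ↦ isProbVector_indicator_eq false
    refine ⟨f₀, f₀, hf₀, hf₀, ?_⟩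
    rw [classical_win_eq f₀ f₀ (fun a ↦ (hf₀ a).true_add_false) (fun b ↦ (hf₀ b).true_add_false)]
    norm_num [f₀, bias]
  · rintro v ⟨f, g, hf, hg, rfl⟩
    rw [classical_win_eq f g (fun a ↦ (hf a).true_add_false) (fun b ↦ (hg b).true_add_false)]
    linarith [chsh_inequality (hf false).abs_bias_le_one (hf true).abs_bias_le_one
      (hg false).abs_bias_le_one (hg true).abs_bias_le_one]

def lineProj (c s : ℝ) : Matrix (Fin 2) (Fin 2) ℂ := vecMulVec ![(c : ℂ), s] ![(c : ℂ), s]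

lemma lineProj_isHermitian (c s : ℝ) : (lineProj c s).IsHermitian := by
  ext i j
  fin_cases i <;> fin_cases j <;> simp [lineProj, vecMulVec_apply, mul_comm]

lemma lineProj_mul_lineProj (c s c' s' : ℝ) :
    lineProj c s * lineProj c' s' =
      ((c * c' + s * s' : ℝ) : ℂ) • vecMulVec ![(c : ℂ), s] ![(c' : ℂ), s'] := by
  rw [lineProj, lineProj, vecMulVec_mul_vecMulVec, vecMulVec_smul]
  simp [dotProduct, Fin.sum_univ_two]

lemma lineProj_mul_self {c s : ℝ} (h : c ^ 2 + s ^ 2 = 1) :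
    lineProj c s * lineProj c s = lineProj c s := by
  rw [lineProj_mul_lineProj, ← sq, ← sq, h, Complex.ofReal_one, one_smul, lineProj]

lemma lineProj_mul_eq_zero {c s c' s' : ℝ} (h : c * c' + s * s' = 0) :
    lineProj c s * lineProj c' s' = 0 := by
  rw [lineProj_mul_lineProj, h, Complex.ofReal_zero, zero_smul]

lemma lineProj_add_lineProj_perp {c s : ℝ} (h : c ^ 2 + s ^ 2 = 1) :
    lineProj c s + lineProj s (-c) = 1 := by
  have hC : (c : ℂ) ^ 2 + (s : ℂ) ^ 2 = 1 := by exact_mod_cast h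
  ext i j
  fin_cases i <;> fin_cases j <;> simp [lineProj, ← sq, mul_comm, add_comm, hC]

def angleMeas (θ : ℝ) : ProjMeas 2 Bool where
  P x := if x then lineProj (cos θ) (sin θ) else lineProj (sin θ) (-cos θ)
  herm x := by cases x <;> exact lineProj_isHermitian _ _
  idem x := by
    cases x
    · exact lineProj_mul_self (by rw [neg_sq]; exact sin_sq_add_cos_sq θ)
    · exact lineProj_mul_self (cos_sq_add_sin_sq θ)
  orth x x' h := by
    cases x <;> cases x' <;> simp only [ne_eq, not_true_eq_false] at h <;>
      exact lineProj_mul_eq_zero (by ring)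
  complete := by
    simpa [Fintype.sum_bool, add_comm] using lineProj_add_lineProj_perp (cos_sq_add_sin_sq θ)

def bellState : Fin 2 × Fin 2 → ℂ := fun p ↦ if p.1 = p.2 then ((√2)⁻¹ : ℝ) else 0

lemma bellState_normSq_sum : ∑ q, Complex.normSq (bellState q) = 1 := by
  norm_num [Fintype.sum_prod_type, bellState, Complex.normSq_ofReal]

lemma bellState_expect_lineProj (c s c' s' : ℝ) :
    (star bellState ⬝ᵥ (lineProj c s ⊗ₖ lineProj c' s') *ᵥ bellState).re =
      (c * c' + s * s') ^ 2 / 2 := by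
  simp [dotProduct, mulVec, Fintype.sum_prod_type, bellState, lineProj]
  linear_combination (c * c' + s * s') ^ 2 / 4 * mul_self_sqrt (zero_le_two (α := ℝ))

lemma bellState_expect_angleMeas (θ φ : ℝ) (x y : Bool) :
    (star bellState ⬝ᵥ ((angleMeas θ).P x ⊗ₖ (angleMeas φ).P y) *ᵥ bellState).re =
      (if x = y then cos (θ - φ) ^ 2 else sin (θ - φ) ^ 2) / 2 := by
  cases x <;> cases y <;>
    simp only [angleMeas, Bool.false_eq_true, Bool.true_eq_false, ↓reduceIte,
      bellState_expect_lineProj, cos_sub, sin_sub] <;> ring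

def aliceAngle (a : Bool) : ℝ := if a then π / 4 else 0

def bobAngle (b : Bool) : ℝ := if b then -(π / 8) else π / 8

def chshStrategy : GQStrat Bool Bool Bool Bool where
  dA := 2
  dB := 2
  ψ := bellState
  unit := bellState_normSq_sum
  Am a := angleMeas (aliceAngle a)
  Bm b := angleMeas (bobAngle b)

lemma chshStrategy_outcomeProb (a b x y : Bool) :
    chshStrategy.outcomeProb a b x y =
      (if x = y then cos (aliceAngle a - bobAngle b) ^ 2
        else sin (aliceAngle a - bobAngle b) ^ 2) / 2 :=
  bellState_expect_angleMeas _ _ x y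

lemma chshStrategy_val : chshStrategy.val CHSHGame = cos (π / 8) ^ 2 := by
  have h₁ : cos (π / 4 - π / 8) = cos (π / 8) := by ring_nf
  have h₂ : sin (π / 4 + π / 8) = cos (π / 8) := by rw [← cos_pi_div_two_sub]; ring_nf
  refine chshStrategy.val_eq_of_forall_win_eq CHSHGame fun a b ↦ ?_
  cases a <;> cases b <;>
    simp [chshStrategy_outcomeProb, aliceAngle, bobAngle, CHSHGame, -cos_pi_div_eight, h₁, h₂,
      two_mul]

lemma three_quarters_lt_cos_sq_pi_div_eight : 3 / 4 < cos (π / 8) ^ 2 := by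
  rw [cos_pi_div_eight, div_pow, sq_sqrt (by positivity)]
  linarith [one_lt_sqrt_two]

/-- Proposition `prop:CHSH`: the entangled value of the CHSH
game is at least `cos²(π/8) ≈ 0.85`, its classical value is exactly `3/4`, and
in particular the entangled value strictly exceeds the classical value. -/
theorem chsh_game_values :
    Real.cos (Real.pi / 8) ^ 2 ≤ CHSHGame.entValue ∧
    CHSHGame.classicalValue = 3 / 4 ∧
    CHSHGame.classicalValue < CHSHGame.entValue := by
  have hent : cos (π / 8) ^ 2 ≤ CHSHGame.entValue :=
    chshStrategy_val ▸ CHSHGame.val_le_entValue chshStrategy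
  refine ⟨hent, CHSHGame.classicalValue_eq, ?_⟩
  rw [CHSHGame.classicalValue_eq]
  exact three_quarters_lt_cos_sq_pi_div_eight.trans_le hent

end
end
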